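/- arXiv:1702.08858 — 2 statements merged into one kernel-verified Lean document; each statement's English description precedes it below -/
import Mathlib

section
/- Under the conditions of Lemma 3 (ℓ ≈ |log H|, u_H the solution of the averaged quasilocal problem, 𝐮_H(ω) the solution of the random quasilocal problem, both with right-hand side f ∈ L²(D)), the stochastic energy error satisfies E[‖∇(𝐮_H − u_H)‖²_{L²(D)}] ≤ C ℓ^{2d} · max_{T∈𝒯_H} E[X(T)²] · ‖f‖²_{L²(D)}, where X(T) measures the local fluctuation of the random quasilocal kernel 𝒜_H around its mean 𝒜̄_H := E[𝒜_H]. -/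
open Finset MeasureTheory
open scoped RealInnerProductSpace

/-!
Subtracting the two discrete problems gives `𝔞(ω)(𝐮_H − u_H, v) = (𝔞̄ − 𝔞(ω))(u_H, v)`. Testing with
`v = 𝐮_H − u_H`, coercivity of `𝔞(ω)` on the left and, on the right, Cauchy–Schwarz over the pairs
`(T, K)` with `K ∈ N^ℓ(T)`, whose patch sizes and overlaps are `≲ ℓ^d`, give pointwise in `ω`
`‖∇(𝐮_H − u_H)‖² ≲ ℓ^{2d} ∑_T |T| |∇u_H|_T|² X(T)²`. Taking expectations and the a priori bound
`‖∇u_H‖ ≲ ‖f‖` for the averaged problem conclude.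
-/

theorem le_sq_div_of_mul_le_mul_sqrt {x c M : ℝ} (hx : 0 ≤ x) (hc : 0 < c)
    (h : c * x ≤ M * √x) : x ≤ (M / c) ^ 2 := by
  rcases hx.eq_or_lt with rfl | hx
  · positivity
  have hsqrt : 0 < √x := Real.sqrt_pos.2 hx
  have : √x ≤ M / c := by
    rw [le_div_iff₀ hc]
    nlinarith [Real.mul_self_sqrt hx.le]
  calc x = √x ^ 2 := (Real.sq_sqrt hx.le).symm
    _ ≤ (M / c) ^ 2 := pow_le_pow_left₀ hsqrt.le this 2

section KernelForm

variable {ι E : Type*} [Fintype ι] [NormedAddCommGroup E] {m : ι → ℝ}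

def energy (m : ι → ℝ) (p : ι → E) : ℝ := ∑ T, m T * ‖p T‖ ^ 2

theorem energy_nonneg (hm : ∀ T, 0 ≤ m T) (p : ι → E) : 0 ≤ energy m p :=
  sum_nonneg fun T _ => mul_nonneg (hm T) (sq_nonneg _)

variable [InnerProductSpace ℝ E]

-- For piecewise constant gradients `p = ∇v`, `q = ∇w` this is the form `𝔞(v, w)` with kernel `G`,
-- and `energy m p = ‖∇v‖²_{L²}`.
def kernelForm (m : ι → ℝ) (G : ι → ι → E →L[ℝ] E) (p q : ι → E) : ℝ :=
  ∑ T, ∑ K, m T * m K * ⟪p T, G T K (q K)⟫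

theorem energy_le_of_coercive {c M : ℝ} {G : ι → ι → E →L[ℝ] E} {F : (ι → E) → ℝ} {u : ι → E}
    (hc : 0 < c) (hm : ∀ T, 0 ≤ m T) (hcoer : c * energy m u ≤ kernelForm m G u u)
    (hF : |F u| ≤ M * √(energy m u)) (hu : kernelForm m G u u = F u) :
    energy m u ≤ (M / c) ^ 2 :=
  le_sq_div_of_mul_le_mul_sqrt (energy_nonneg hm u) hc <|
    hcoer.trans <| hu ▸ (le_abs_self _).trans hF

theorem kernelForm_sub_left (G : ι → ι → E →L[ℝ] E) (p p' q : ι → E) :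
    kernelForm m G (p - p') q = kernelForm m G p q - kernelForm m G p' q := by
  simp only [kernelForm, ← sum_sub_distrib, Pi.sub_apply, inner_sub_left, mul_sub]

theorem kernelForm_sub_kernel (G G' : ι → ι → E →L[ℝ] E) (p q : ι → E) :
    kernelForm m (G - G') p q = kernelForm m G p q - kernelForm m G' p q := by
  simp only [kernelForm, ← sum_sub_distrib, Pi.sub_apply, sub_apply,
    inner_sub_right, mul_sub]

theorem kernelForm_sub_eq_of_solves {G G' : ι → ι → E →L[ℝ] E} {F : (ι → E) → ℝ} {u u' : ι → E}
    (hu : ∀ v, kernelForm m G u v = F v) (hu' : ∀ v, kernelForm m G' u' v = F v) (v : ι → E) :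
    kernelForm m G (u - u') v = kernelForm m (G' - G) u' v := by
  rw [kernelForm_sub_left, kernelForm_sub_kernel, hu, hu']

theorem sum_sum_le_of_overlap [DecidableEq ι] {Nbr : ι → Finset ι} {L : ℝ}
    (hover : ∀ K, (#{T | K ∈ Nbr T} : ℝ) ≤ L) {f : ι → ℝ} (hf : ∀ K, 0 ≤ f K) :
    ∑ T, ∑ K ∈ Nbr T, f K ≤ L * ∑ K, f K := by
  rw [sum_comm' (t' := univ) (s' := fun K => {T | K ∈ Nbr T}) (by simp), mul_sum]
  refine sum_le_sum fun K _ => ?_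
  rw [sum_const, nsmul_eq_mul]
  exact mul_le_mul_of_nonneg_right (hover K) (hf K)

theorem abs_mul_mul_inner_apply_le {a b x : ℝ} {D : E →L[ℝ] E} (ha : 0 ≤ a) (hb : 0 ≤ b)
    (hD : a * ‖D‖ ≤ x) (p q : E) : |a * b * ⟪p, D q⟫| ≤ b * (x * ‖p‖ * ‖q‖) := calc
  _ = a * b * |⟪p, D q⟫| := by rw [abs_mul, abs_of_nonneg (mul_nonneg ha hb)]
  _ ≤ a * b * (‖p‖ * (‖D‖ * ‖q‖)) := by
      gcongr
      exact (abs_real_inner_le_norm _ _).trans (by gcongr; exact D.le_opNorm q)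
  _ = b * (‖p‖ * ‖q‖) * (a * ‖D‖) := by ring
  _ ≤ b * (‖p‖ * ‖q‖) * x := by gcongr
  _ = b * (x * ‖p‖ * ‖q‖) := by ring

theorem kernelForm_le_of_local [DecidableEq ι] {Nbr : ι → Finset ι} {L : ℝ}
    {D : ι → ι → E →L[ℝ] E} {X : ι → ℝ} (hm : ∀ T, 0 ≤ m T) (hL : 0 ≤ L)
    (hnbr : ∀ T, ∑ K ∈ Nbr T, m K ≤ L * m T) (hover : ∀ K, (#{T | K ∈ Nbr T} : ℝ) ≤ L)
    (hloc : ∀ T K, K ∉ Nbr T → D T K = 0) (hX : ∀ T, ∀ K ∈ Nbr T, m T * ‖D T K‖ ≤ X T)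
    (p q : ι → E) :
    kernelForm m D p q ≤ L * √(∑ T, m T * ‖p T‖ ^ 2 * X T ^ 2) * √(energy m q) := by
  set P := ∑ T, m T * ‖p T‖ ^ 2 * X T ^ 2
  have hlocal : kernelForm m D p q = ∑ T, ∑ K ∈ Nbr T, m T * m K * ⟪p T, D T K (q K)⟫ :=
    sum_congr rfl fun T _ => (sum_subset (subset_univ _) fun K _ hK => by simp [hloc T K hK]).symm
  have hterm : ∀ T, ∀ K ∈ Nbr T, (m T * m K * ⟪p T, D T K (q K)⟫) ^ 2
      ≤ (m K * (X T * ‖p T‖) ^ 2) * (m K * ‖q K‖ ^ 2) := fun T K hK => calc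
    _ = |m T * m K * ⟪p T, D T K (q K)⟫| ^ 2 := (sq_abs _).symm
    _ ≤ (m K * (X T * ‖p T‖ * ‖q K‖)) ^ 2 := pow_le_pow_left₀ (abs_nonneg _)
        (abs_mul_mul_inner_apply_le (hm T) (hm K) (hX T K hK) _ _) 2
    _ = _ := by ring
  have hcs := sum_sq_le_sum_mul_sum_of_sq_le_mul (univ.sigma Nbr)
    (fun x _ => mul_nonneg (hm x.2) (sq_nonneg (X x.1 * ‖p x.1‖)))
    (fun x _ => mul_nonneg (hm x.2) (sq_nonneg ‖q x.2‖))
    (fun x hx => hterm x.1 x.2 (mem_sigma.1 hx).2)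
  simp only [sum_sigma] at hcs
  have hleft : ∑ T, ∑ K ∈ Nbr T, m K * (X T * ‖p T‖) ^ 2 ≤ L * P := by
    rw [mul_sum]
    refine sum_le_sum fun T _ => ?_
    rw [← sum_mul]
    calc _ ≤ L * m T * (X T * ‖p T‖) ^ 2 := by gcongr; exact hnbr T
      _ = _ := by ring
  have hright : ∑ T, ∑ K ∈ Nbr T, m K * ‖q K‖ ^ 2 ≤ L * energy m q :=
    sum_sum_le_of_overlap hover fun K => mul_nonneg (hm K) (sq_nonneg _)
  have hP : 0 ≤ P := sum_nonneg fun T _ => by have := hm T; positivity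
  calc kernelForm m D p q ≤ √((L * P) * (L * energy m q)) := by
        rw [hlocal]
        refine Real.le_sqrt_of_sq_le (hcs.trans ?_)
        exact mul_le_mul hleft hright (sum_nonneg fun T _ => sum_nonneg fun K _ =>
          mul_nonneg (hm K) (sq_nonneg _)) (mul_nonneg hL hP)
    _ = L * √P * √(energy m q) := by
        rw [show L * P * (L * energy m q) = L ^ 2 * (P * energy m q) by ring,
          Real.sqrt_mul (sq_nonneg L), Real.sqrt_sq hL, Real.sqrt_mul hP, mul_assoc]

theorem energy_sub_le_of_local_perturbation [DecidableEq ι] {Nbr : ι → Finset ι} {c L : ℝ}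
    {G G' : ι → ι → E →L[ℝ] E} {X : ι → ℝ} {F : (ι → E) → ℝ} {u u' : ι → E}
    (hc : 0 < c) (hm : ∀ T, 0 ≤ m T) (hL : 0 ≤ L)
    (hnbr : ∀ T, ∑ K ∈ Nbr T, m K ≤ L * m T) (hover : ∀ K, (#{T | K ∈ Nbr T} : ℝ) ≤ L)
    (hcoer : ∀ p, c * energy m p ≤ kernelForm m G p p)
    (hloc : ∀ T K, K ∉ Nbr T → (G' - G) T K = 0)
    (hX : ∀ T, ∀ K ∈ Nbr T, m T * ‖(G' - G) T K‖ ≤ X T)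
    (hu : ∀ v, kernelForm m G u v = F v) (hu' : ∀ v, kernelForm m G' u' v = F v) :
    energy m (u - u') ≤ (L / c) ^ 2 * ∑ T, m T * ‖u' T‖ ^ 2 * X T ^ 2 := by
  have h := (hcoer (u - u')).trans_eq (kernelForm_sub_eq_of_solves hu hu' (u - u')) |>.trans
    (kernelForm_le_of_local hm hL hnbr hover hloc hX u' (u - u'))
  have hP : 0 ≤ ∑ T, m T * ‖u' T‖ ^ 2 * X T ^ 2 :=
    sum_nonneg fun T _ => by have := hm T; positivity
  calc _ ≤ (L * √(∑ T, m T * ‖u' T‖ ^ 2 * X T ^ 2) / c) ^ 2 :=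
        le_sq_div_of_mul_le_mul_sqrt (energy_nonneg hm _) hc h
    _ = _ := by rw [div_pow, mul_pow, Real.sq_sqrt hP]; ring

end KernelForm

theorem integral_le_sup'_integral_mul_sum {ι Ω : Type*} [Fintype ι] [Nonempty ι]
    [MeasurableSpace Ω] {μ : Measure Ω} {f : Ω → ℝ} {Y : Ω → ι → ℝ} {w : ι → ℝ}
    (hf : Integrable f μ) (hY : ∀ T, Integrable (fun ω => Y ω T) μ) (hw : ∀ T, 0 ≤ w T)
    (h : ∀ ω, f ω ≤ ∑ T, w T * Y ω T) :
    ∫ ω, f ω ∂μ ≤ (univ.sup' univ_nonempty fun T => ∫ ω, Y ω T ∂μ) * ∑ T, w T := by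
  calc ∫ ω, f ω ∂μ ≤ ∫ ω, ∑ T, w T * Y ω T ∂μ :=
        integral_mono hf (integrable_finsetSum _ fun T _ => (hY T).const_mul _) h
    _ = ∑ T, w T * ∫ ω, Y ω T ∂μ := by
        rw [integral_finsetSum _ fun T _ => (hY T).const_mul _]
        simp only [integral_const_mul]
    _ ≤ ∑ T, w T * univ.sup' univ_nonempty fun T => ∫ ω, Y ω T ∂μ :=
        sum_le_sum fun T _ => mul_le_mul_of_nonneg_left (le_sup' (fun T => ∫ ω, Y ω T ∂μ)
          (mem_univ T)) (hw T)
    _ = _ := by rw [← sum_mul, mul_comm]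

/-- Lemma 3: stochastic energy error of the averaged quasilocal model.
The coarse mesh `𝒯_H` is modelled by a finite index set `ι` of cells of equal
measure `m T = |T|`; finite element functions are represented by their piecewise
constant gradients `p : ι → ℝ^d`, so that `‖∇v‖²_{L²(D)} = ∑_T m T ‖p T‖²`.
`G ω` is the random quasilocal kernel `𝒜_H(ω)` (values: `d×d` matrices as linear
maps), supported on patches `Nbr T` of cardinality `≲ ℓ^d` with finite overlap
(`ℓ ≈ |log H|` the oversampling parameter), `Gbar = E[𝒜_H]` its expectation, and
both induced bilinear forms are uniformly coercive with constant `c`.  The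
right-hand side functional satisfies `|F(v)| ≤ C(D)‖f‖‖∇v‖` (Friedrichs).  With
`X ω T := max_{K ∈ Nbr T} m T ‖𝒜_H(ω)|_{T,K} − 𝒜̄_H|_{T,K}‖`, the solutions
`𝐮_H(ω)` and `u_H` of the random and averaged quasilocal problems satisfy
`E[‖∇(𝐮_H − u_H)‖²_{L²(D)}] ≤ C ℓ^{2d} max_T E[X(T)²] ‖f‖²_{L²(D)}`
for a constant `C` depending only on `c`, `C(D)`, the overlap constant `A`
and `d`. -/
theorem stmt_8 (d : ℕ) (c CD A : ℝ) (hc : 0 < c) (hCD : 0 < CD) (hA : 0 < A) :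
    ∃ C > 0, ∀ (ℓ : ℕ) (_hℓ : 1 ≤ ℓ)
      (ι : Type) (_ : Fintype ι) (_ : Nonempty ι) (_ : DecidableEq ι)
      (Ω : Type) (_ : MeasurableSpace Ω) (μ : Measure Ω) (_ : IsProbabilityMeasure μ)
      (m : ι → ℝ) (_hm : ∀ T, 0 < m T) (_huni : ∀ T K : ι, m T = m K)
      (Nbr : ι → Finset ι) (hNbr : ∀ T, (Nbr T).Nonempty)
      (_hcard : ∀ T, ((Nbr T).card : ℝ) ≤ A * (ℓ : ℝ) ^ d)
      (_hover : ∀ K, ((Finset.univ.filter (fun T => K ∈ Nbr T)).card : ℝ) ≤ A * (ℓ : ℝ) ^ d)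
      (G : Ω → ι → ι → (EuclideanSpace ℝ (Fin d) →L[ℝ] EuclideanSpace ℝ (Fin d)))
      (Gbar : ι → ι → (EuclideanSpace ℝ (Fin d) →L[ℝ] EuclideanSpace ℝ (Fin d)))
      (_hGint : ∀ T K, Integrable (fun ω => G ω T K) μ)
      (_hGbar : ∀ T K, Gbar T K = ∫ ω, G ω T K ∂μ)
      (_hloc : ∀ ω T K, K ∉ Nbr T → G ω T K = 0)
      (_hcoer : ∀ ω (p : ι → EuclideanSpace ℝ (Fin d)),
        c * (∑ T, m T * ‖p T‖ ^ 2) ≤ ∑ T, ∑ K, m T * m K * ⟪p T, G ω T K (p K)⟫)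
      (_hcoerbar : ∀ p : ι → EuclideanSpace ℝ (Fin d),
        c * (∑ T, m T * ‖p T‖ ^ 2) ≤ ∑ T, ∑ K, m T * m K * ⟪p T, Gbar T K (p K)⟫)
      (fnorm : ℝ) (_hfnorm : 0 ≤ fnorm)
      (F : (ι → EuclideanSpace ℝ (Fin d)) → ℝ)
      (_hF : ∀ p : ι → EuclideanSpace ℝ (Fin d),
        |F p| ≤ CD * fnorm * Real.sqrt (∑ T, m T * ‖p T‖ ^ 2))
      (X : Ω → ι → ℝ)
      (_hX : ∀ ω T, X ω T = (Nbr T).sup' (hNbr T) (fun K => m T * ‖G ω T K - Gbar T K‖))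
      (_hXint : ∀ T, Integrable (fun ω => (X ω T) ^ 2) μ)
      (bu : Ω → ι → EuclideanSpace ℝ (Fin d)) (u : ι → EuclideanSpace ℝ (Fin d))
      (_hbu : ∀ ω (v : ι → EuclideanSpace ℝ (Fin d)),
        ∑ T, ∑ K, m T * m K * ⟪bu ω T, G ω T K (v K)⟫ = F v)
      (_hu : ∀ v : ι → EuclideanSpace ℝ (Fin d),
        ∑ T, ∑ K, m T * m K * ⟪u T, Gbar T K (v K)⟫ = F v)
      (_herrint : Integrable (fun ω => ∑ T, m T * ‖bu ω T - u T‖ ^ 2) μ),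
      ∫ ω, ∑ T, m T * ‖bu ω T - u T‖ ^ 2 ∂μ ≤
        C * (ℓ : ℝ) ^ (2 * d) *
          (Finset.univ.sup' Finset.univ_nonempty (fun T => ∫ ω, (X ω T) ^ 2 ∂μ)) *
          fnorm ^ 2 := by
  refine ⟨A ^ 2 * CD ^ 2 / c ^ 4, by positivity, ?_⟩
  intro ℓ _ ι _ _ _ Ω _ μ _ m hm huni Nbr _ hcard hover G Gbar _ hGbar hloc hcoer hcoerbar
    fnorm _ F hF X hX hXint bu u hbu hu herrint
  set L := A * (ℓ : ℝ) ^ d with hL_def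
  have hm₀ : ∀ T, 0 ≤ m T := fun T => (hm T).le
  have hnbr : ∀ T, ∑ K ∈ Nbr T, m K ≤ L * m T := fun T => by
    rw [sum_congr rfl fun K _ => huni K T, sum_const, nsmul_eq_mul]
    exact mul_le_mul_of_nonneg_right (hcard T) (hm₀ T)
  have hGbar_loc : ∀ T K, K ∉ Nbr T → Gbar T K = 0 := fun T K hK => by
    simp [hGbar, hloc _ T K hK]
  have herr : ∀ ω, ∑ T, m T * ‖bu ω T - u T‖ ^ 2
      ≤ ∑ T, (L / c) ^ 2 * (m T * ‖u T‖ ^ 2) * X ω T ^ 2 := fun ω => by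
    have hX_le : ∀ T, ∀ K ∈ Nbr T, m T * ‖(Gbar - G ω) T K‖ ≤ X ω T := fun T K hK => by
      rw [Pi.sub_apply, Pi.sub_apply, norm_sub_rev, hX]
      exact le_sup' (fun K => m T * ‖G ω T K - Gbar T K‖) hK
    have := energy_sub_le_of_local_perturbation hc hm₀ (by positivity) hnbr hover (hcoer ω)
      (fun T K hK => by simp [hGbar_loc T K hK, hloc ω T K hK]) hX_le (hbu ω) hu
    exact this.trans_eq (by rw [mul_sum]; exact sum_congr rfl fun T _ => by ring)
  have hu_energy : energy m u ≤ (CD * fnorm / c) ^ 2 :=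
    energy_le_of_coercive hc hm₀ (hcoerbar u) (hF u) (hu u)
  set M := univ.sup' univ_nonempty fun T => ∫ ω, X ω T ^ 2 ∂μ
  have hM : 0 ≤ M := (integral_nonneg fun _ => sq_nonneg _).trans
    (le_sup' (fun T => ∫ ω, X ω T ^ 2 ∂μ) (mem_univ (Classical.arbitrary ι)))
  calc _ ≤ M * ∑ T, (L / c) ^ 2 * (m T * ‖u T‖ ^ 2) :=
        integral_le_sup'_integral_mul_sum herrint hXint (fun T => by have := hm₀ T; positivity) herr
    _ = M * ((L / c) ^ 2 * energy m u) := by rw [← mul_sum]; rfl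
    _ ≤ M * ((L / c) ^ 2 * (CD * fnorm / c) ^ 2) := by gcongr
    _ = _ := by rw [hL_def, mul_comm 2 d, pow_mul]; field_simp
end

section
/- Stability of the corrector: with 𝒞 : V_H → W the A-orthogonal projection as above, for all v_H ∈ V_H one has ‖∇𝒞v_H‖_{L²(D)} ≤ (β/α) ‖∇v_H‖_{L²(D)} and ‖∇(1−𝒞)v_H‖_{L²(D)} ≤ (1 + β/α) ‖∇v_H‖_{L²(D)}; moreover, if additionally I_H(1−𝒞)v_H = v_H with I_H bounded by C_{I_H} in the H¹-seminorm, then the corrected form satisfies the coercivity 𝔞(v_H,v_H) ≥ α C_{I_H}^{-2} ‖∇v_H‖²_{L²(D)}. -/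
/-- Stability of the corrector and coercivity of the corrected form.
Setting as in the ideal LOD method: `V` models `H¹₀(D)` with the gradient norm,
`aA u v := ∫_D ∇u·(A∇v) dx` is symmetric, coercive with constant `α`, bounded by
`β` (`A ∈ M(D,α,β)`), `W = ker I_H` is a subspace, and `𝒞 v ∈ W` is the
`A`-orthogonal projection onto `W`: `aA w (𝒞 v) = aA w v` for all `w ∈ W`.
Then `‖∇𝒞v‖ ≤ (β/α)‖∇v‖`, `‖∇(1−𝒞)v‖ ≤ (1+β/α)‖∇v‖`, and if in addition the
quasi-interpolation `I_H` is `H¹`-stable with constant `C_{I_H}` and satisfies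
`I_H (1−𝒞)v = v`, then the corrected form `𝔞(v,v) = aA v ((1−𝒞)v)` obeys the
coercivity `𝔞(v,v) ≥ α C_{I_H}⁻² ‖∇v‖²`. -/
theorem stmt_19 {V : Type*} [NormedAddCommGroup V] [InnerProductSpace ℝ V]
    (α β CI : ℝ) (hα : 0 < α) (hαβ : α ≤ β) (hCI : 0 < CI)
    (W : Submodule ℝ V)
    (aA : V →ₗ[ℝ] V →ₗ[ℝ] ℝ)
    (hsym : ∀ u v : V, aA u v = aA v u)
    (hcoer : ∀ v : V, α * ‖v‖ ^ 2 ≤ aA v v)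
    (hbdd : ∀ u v : V, |aA u v| ≤ β * ‖u‖ * ‖v‖)
    (𝒞 : V → V) (h𝒞mem : ∀ v, 𝒞 v ∈ W)
    (h𝒞 : ∀ v : V, ∀ w ∈ W, aA w (𝒞 v) = aA w v)
    (IH : V → V) (hIHb : ∀ v : V, ‖IH v‖ ≤ CI * ‖v‖) :
    ∀ v : V,
      ‖𝒞 v‖ ≤ (β / α) * ‖v‖ ∧
      ‖v - 𝒞 v‖ ≤ (1 + β / α) * ‖v‖ ∧
      (IH (v - 𝒞 v) = v → α * (CI ^ 2)⁻¹ * ‖v‖ ^ 2 ≤ aA v (v - 𝒞 v)) := by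
  intro v
  have hstab : ‖𝒞 v‖ ≤ (β / α) * ‖v‖ := by
    have h1 : α * ‖𝒞 v‖ ^ 2 ≤ β * ‖𝒞 v‖ * ‖v‖ := by
      calc α * ‖𝒞 v‖ ^ 2 ≤ aA (𝒞 v) (𝒞 v) := hcoer _
        _ = aA (𝒞 v) v := h𝒞 v _ (h𝒞mem v)
        _ ≤ β * ‖𝒞 v‖ * ‖v‖ := le_trans (le_abs_self _) (hbdd _ _)
    rcases eq_or_lt_of_le (norm_nonneg (𝒞 v)) with h0 | h0
    · rw [← h0]
      have hβ : 0 < β := lt_of_lt_of_le hα hαβ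
      positivity
    · rw [div_mul_eq_mul_div, le_div_iff₀ hα]
      nlinarith
  refine ⟨hstab, ?_, ?_⟩
  · calc ‖v - 𝒞 v‖ ≤ ‖v‖ + ‖𝒞 v‖ := norm_sub_le _ _
      _ ≤ ‖v‖ + (β / α) * ‖v‖ := by linarith
      _ = (1 + β / α) * ‖v‖ := by ring
  · intro hIH
    have hnv : ‖v‖ ≤ CI * ‖v - 𝒞 v‖ := by
      calc ‖v‖ = ‖IH (v - 𝒞 v)‖ := by rw [hIH]
        _ ≤ CI * ‖v - 𝒞 v‖ := hIHb _
    have key : aA v (v - 𝒞 v) = aA (v - 𝒞 v) (v - 𝒞 v) := by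
      have : aA (𝒞 v) (v - 𝒞 v) = 0 := by
        rw [map_sub, h𝒞 v _ (h𝒞mem v), sub_self]
      have h4 : aA (v - 𝒞 v) (v - 𝒞 v) = aA v (v - 𝒞 v) - aA (𝒞 v) (v - 𝒞 v) := by
        simp
      linarith
    rw [key]
    have h2 : ‖v‖ ^ 2 ≤ CI ^ 2 * ‖v - 𝒞 v‖ ^ 2 := by nlinarith [norm_nonneg v, norm_nonneg (v - 𝒞 v)]
    have := hcoer (v - 𝒞 v)
    rw [mul_assoc]
    have h3 : (CI ^ 2)⁻¹ * ‖v‖ ^ 2 ≤ ‖v - 𝒞 v‖ ^ 2 := by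
      rw [inv_mul_le_iff₀ (by positivity)]
      linarith
    nlinarith
end
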